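/- arXiv:2502.01805 — 5 statements merged into one kernel-verified Lean document; each statement's English description precedes it below -/
import Mathlib

section
/- Let (Γ,φ) be an incidence gain graph with underlying incidence structure (P,B,I) and gain group acting on a nonempty set Λ. For elements u₀,…,u_k ∈ P ∪ B (k ≥ 1), the sequence (u₀,…,u_k) is a k-chain in (P,B,I) if and only if there exist λ₀,…,λ_k ∈ Λ such that (m₀,…,m_k) is a k-chain in 𝔐(Γ,φ), where m_i = y_{u_i,λ_i} if u_i ∈ B and m_i = z_{u_i,λ_i} if u_i ∈ P. Moreover, in that case λ_k = φ_w · λ₀ where w is the corresponding walk in Γ. -/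
/-!
Adjacency of `m_i` and `m_{i+1}` in 𝔐(Γ,φ) says exactly that `u_i` and `u_{i+1}` are
incident and that `λ_{i+1} = φ(e_{i+1})^{δ_{i+1}} • λ_i`. Hence along a chain of 𝔐 the labels
are transported by the gains of the steps, giving `λ_k = φ_w • λ_0`; conversely, for a chain
`(u_0, …, u_k)` and any `λ_0`, the labels `λ_i := φ_{(u_0,…,u_i)} • λ_0` lift it to 𝔐.
-/

open Classical

/-- An incidence structure: points `P`, lines `B`, incidence relation `inc`. -/
structure IncStruct (P B : Type*) where
  inc : P → B → Prop

namespace IncStruct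

variable {P B : Type*}

/-- Adjacency in the incidence graph on `P ⊕ B`. -/
def adj (S : IncStruct P B) : P ⊕ B → P ⊕ B → Prop
  | Sum.inl p, Sum.inr b => S.inc p b
  | Sum.inr b, Sum.inl p => S.inc p b
  | _, _ => False

/-- `c` is a `k`-chain from `u` to `v`: a list of `k+1` elements, starting at `u`,
ending at `v`, with consecutive elements incident. -/
def IsNChain (S : IncStruct P B) (k : ℕ) (u v : P ⊕ B) (c : List (P ⊕ B)) : Prop :=
  c.length = k + 1 ∧ c.head? = some u ∧ c.getLast? = some v ∧ c.Chain' S.adj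

/-- Distance between two elements of an incidence structure: the least length of a
chain from `u` to `v`, or `∞` if there is none. -/
noncomputable def dist (S : IncStruct P B) (u v : P ⊕ B) : ℕ∞ :=
  sInf {n : ℕ∞ | ∃ (k : ℕ) (c : List (P ⊕ B)), n = (k : ℕ∞) ∧ S.IsNChain k u v c}

/-- A linear space: two distinct points lie on a unique common line, every line has
at least two points, and some point-line pair is non-incident. -/
def IsLinearSpace (S : IncStruct P B) : Prop :=
  (∀ p q : P, p ≠ q → ∃! b : B, S.inc p b ∧ S.inc q b) ∧
  (∀ b : B, ∃ p q : P, p ≠ q ∧ S.inc p b ∧ S.inc q b) ∧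
  (∃ (p : P) (b : B), ¬ S.inc p b)

/-- A generalized quadrangle: all distances are at most `4`, and whenever
`d(u,v) = k < 4` there is a unique `k`-chain from `u` to `v`. -/
def IsGQ (S : IncStruct P B) : Prop :=
  (∀ u v : P ⊕ B, S.dist u v ≤ 4) ∧
  ∀ (u v : P ⊕ B) (k : ℕ), k < 4 → S.dist u v = (k : ℕ∞) →
    ∃! c : List (P ⊕ B), S.IsNChain k u v c

end IncStruct

section Construction

variable {P B G : Type*} [Group G]

/-- Incidence of Construction 𝔐: points are `P ⊕ B × Λ` (the `x_p` and `y_{b,λ}`),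
lines are `P × Λ` (the `z_{p,μ}`); `x_p I' z_{p,λ}` always, and
`y_{b,λ} I' z_{p,μ}` iff `b I p` and `μ = φ(bp) • λ`. -/
def Minc (S : IncStruct P B) (φ : B → P → G) (Λ : Type*) [MulAction G Λ] :
    P ⊕ B × Λ → P × Λ → Prop
  | Sum.inl q, (p, _) => q = p
  | Sum.inr (b, l), (p, m) => S.inc p b ∧ m = φ b p • l

/-- The incidence structure 𝔐(Γ,φ) of Construction 𝔐. -/
def MStruct (S : IncStruct P B) (φ : B → P → G) (Λ : Type*) [MulAction G Λ] :
    IncStruct (P ⊕ B × Λ) (P × Λ) := ⟨Minc S φ Λ⟩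

/-- The gain `ρ_{b,p}(q) = φ(b'p) φ(b'q)⁻¹ φ(bq)` of the walk `(b, q, b', p)`,
where `b'` is the (unique, in a linear space) line through `p` and `q`. -/
noncomputable def rho (S : IncStruct P B) (φ : B → P → G) (b : B) (p q : P) : G :=
  if h : ∃ b' : B, S.inc p b' ∧ S.inc q b' then
    φ h.choose p * (φ h.choose q)⁻¹ * φ b q
  else 1

end Construction

section Stmt1

variable {P B G : Type*} [Group G]

/-- The gain of a single step of a walk in the incidence graph: edges are oriented
line-to-point, so a step from a line to a point contributes `φ(e)` and a step from a
point to a line contributes `φ(e)⁻¹`. -/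
def stepGain (φ : B → P → G) : P ⊕ B → P ⊕ B → G
  | Sum.inr b, Sum.inl p => φ b p
  | Sum.inl p, Sum.inr b => (φ b p)⁻¹
  | _, _ => 1

/-- The gain `φ_w` of a walk `w = (u_0, …, u_k)`, multiplied "backwards":
`φ(e_k)^{δ_k} ⋯ φ(e_1)^{δ_1}`. -/
def walkGain (φ : B → P → G) : (k : ℕ) → (Fin (k + 1) → P ⊕ B) → G
  | 0, _ => 1
  | k + 1, u =>
      stepGain φ (u (Fin.last k).castSucc) (u (Fin.last (k + 1))) *
        walkGain φ k (fun i => u i.castSucc)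

/-- The element `m_i` of 𝔐(Γ,φ) associated to `u_i` and `λ_i`: the point
`y_{u_i,λ_i}` if `u_i` is a line, and the line `z_{u_i,λ_i}` if `u_i` is a point. -/
def mMap {Λ : Type*} {k : ℕ} (u : Fin (k + 1) → P ⊕ B) (lam : Fin (k + 1) → Λ)
    (i : Fin (k + 1)) : (P ⊕ B × Λ) ⊕ P × Λ :=
  match u i with
  | Sum.inl p => Sum.inr (p, lam i)
  | Sum.inr b => Sum.inl (Sum.inr (b, lam i))

def mElem {Λ : Type*} (x : P ⊕ B) (l : Λ) : (P ⊕ B × Λ) ⊕ P × Λ :=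
  match x with
  | Sum.inl p => Sum.inr (p, l)
  | Sum.inr b => Sum.inl (Sum.inr (b, l))

theorem mMap_eq_mElem {Λ : Type*} {k : ℕ} (u : Fin (k + 1) → P ⊕ B) (lam : Fin (k + 1) → Λ)
    (i : Fin (k + 1)) : mMap u lam i = mElem (u i) (lam i) :=
  rfl

theorem MStruct_adj_mElem_iff {Λ : Type*} [MulAction G Λ] (S : IncStruct P B)
    (φ : B → P → G) (x y : P ⊕ B) (l m : Λ) :
    (MStruct S φ Λ).adj (mElem x l) (mElem y m) ↔ S.adj x y ∧ m = stepGain φ x y • l := by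
  rcases x with p | b <;> rcases y with q | c <;>
    simp only [mElem, MStruct, IncStruct.adj, Minc, stepGain, false_and]
  exact and_congr_right fun _ => eq_comm.trans eq_inv_smul_iff.symm

theorem walkGain_smul_of_step {Λ : Type*} [MulAction G Λ] (φ : B → P → G) :
    ∀ (k : ℕ) (u : Fin (k + 1) → P ⊕ B) (lam : Fin (k + 1) → Λ),
      (∀ i : Fin k, lam i.succ = stepGain φ (u i.castSucc) (u i.succ) • lam i.castSucc) →
      lam (Fin.last k) = walkGain φ k u • lam 0
  | 0, _, _, _ => (one_smul G _).symm
  | k + 1, u, lam, h => by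
    have ih := walkGain_smul_of_step φ k (fun i => u i.castSucc) (fun i => lam i.castSucc)
      fun i => by simpa only [Fin.succ_castSucc] using h i.castSucc
    rw [walkGain, mul_smul, ← Fin.succ_last, h, Fin.succ_last]
    exact congrArg _ ih

def prefixLabels {Λ : Type*} [MulAction G Λ] (φ : B → P → G) {k : ℕ}
    (u : Fin (k + 1) → P ⊕ B) (l₀ : Λ) (i : Fin (k + 1)) : Λ :=
  walkGain φ i (fun j => u (Fin.castLE (by omega) j)) • l₀

theorem prefixLabels_succ {Λ : Type*} [MulAction G Λ] (φ : B → P → G) {k : ℕ}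
    (u : Fin (k + 1) → P ⊕ B) (l₀ : Λ) (i : Fin k) :
    prefixLabels φ u l₀ i.succ =
      stepGain φ (u i.castSucc) (u i.succ) • prefixLabels φ u l₀ i.castSucc := by
  simp only [prefixLabels, Fin.val_succ, walkGain, mul_smul, Fin.val_castSucc]
  rfl

theorem chain_correspondence_general {Λ : Type*} [MulAction G Λ] [Nonempty Λ]
    (S : IncStruct P B) (φ : B → P → G) (k : ℕ)
    (u : Fin (k + 1) → P ⊕ B) :
    ((∀ i : Fin k, S.adj (u i.castSucc) (u i.succ)) ↔
      ∃ lam : Fin (k + 1) → Λ,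
        ∀ i : Fin k,
          (MStruct S φ Λ).adj (mMap u lam i.castSucc) (mMap u lam i.succ)) ∧
    ∀ lam : Fin (k + 1) → Λ,
      (∀ i : Fin k,
          (MStruct S φ Λ).adj (mMap u lam i.castSucc) (mMap u lam i.succ)) →
      lam (Fin.last k) = walkGain φ k u • lam 0 := by
  simp only [mMap_eq_mElem, MStruct_adj_mElem_iff]
  refine ⟨⟨fun hchain => ?_, fun ⟨_, hlam⟩ i => (hlam i).1⟩,
    fun lam hlam => walkGain_smul_of_step φ k u lam fun i => (hlam i).2⟩
  obtain ⟨l₀⟩ := ‹Nonempty Λ›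
  exact ⟨prefixLabels φ u l₀, fun i => ⟨hchain i, prefixLabels_succ φ u l₀ i⟩⟩

/-- `(u_0,…,u_k)` is a `k`-chain in `(P,B,I)` iff there are
`λ_0,…,λ_k` making `(m_0,…,m_k)` a `k`-chain in 𝔐(Γ,φ); moreover in that case
`λ_k = φ_w • λ_0`. -/
theorem chain_correspondence {Λ : Type*} [MulAction G Λ] [Nonempty Λ]
    (S : IncStruct P B) (φ : B → P → G) (k : ℕ) (hk : 1 ≤ k)
    (u : Fin (k + 1) → P ⊕ B) :
    ((∀ i : Fin k, S.adj (u i.castSucc) (u i.succ)) ↔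
      ∃ lam : Fin (k + 1) → Λ,
        ∀ i : Fin k,
          (MStruct S φ Λ).adj (mMap u lam i.castSucc) (mMap u lam i.succ)) ∧
    ∀ lam : Fin (k + 1) → Λ,
      (∀ i : Fin k,
          (MStruct S φ Λ).adj (mMap u lam i.castSucc) (mMap u lam i.succ)) →
      lam (Fin.last k) = walkGain φ k u • lam 0 :=
  chain_correspondence_general S φ k u

end Stmt1
end

section
/- Let (Γ,φ) be an incidence gain graph whose underlying incidence structure (P,B,I) is a linear space, with gain group acting on a nonempty set Λ. If p ≠ q are points of P and λ ∈ Λ, then the distance from x_p to z_{q,λ} in 𝔐(Γ,φ) equals 3, and there is a unique 3-chain from x_p to z_{q,λ}. -/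
/-!
The incidence graph of 𝔐(Γ,φ) is bipartite, so a chain from the point `x_p` to the line
`z_{q,λ}` has odd length, and a 1-chain would force `p = q`. A 3-chain
`x_p, z_{p,μ}, w, z_{q,λ}` cannot have `w = x_r` (that needs `r = p` and `r = q`), so
`w = y_{b,l}` with `b` through `p` and `q`. In a linear space `b` is the unique line `pq`, and
then `l = φ(bq)⁻¹ • λ` and `μ = φ(bp) • l` are forced.
-/

open Classical

namespace IncStruct

variable {P B : Type*} (S : IncStruct P B)

@[simp]
theorem adj_inl_inr {a : P} {b : B} : S.adj (Sum.inl a) (Sum.inr b) ↔ S.inc a b := Iff.rfl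

@[simp]
theorem adj_inr_inl {a : P} {b : B} : S.adj (Sum.inr b) (Sum.inl a) ↔ S.inc a b := Iff.rfl

@[simp]
theorem not_adj_inl_inl {a a' : P} : ¬ S.adj (Sum.inl a) (Sum.inl a') := id

@[simp]
theorem not_adj_inr_inr {b b' : B} : ¬ S.adj (Sum.inr b) (Sum.inr b') := id

theorem isNChain_zero_iff {u v : P ⊕ B} {c : List (P ⊕ B)} :
    S.IsNChain 0 u v c ↔ c = [u] ∧ u = v := by
  constructor
  · rintro ⟨hlen, hhead, hlast, -⟩
    obtain ⟨a, rfl⟩ := List.length_eq_one_iff.1 hlen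
    simp_all
  · rintro ⟨rfl, rfl⟩
    exact ⟨rfl, rfl, rfl, List.isChain_singleton _⟩

theorem isNChain_succ_iff {k : ℕ} {u v : P ⊕ B} {c : List (P ⊕ B)} :
    S.IsNChain (k + 1) u v c ↔ ∃ w c', c = u :: c' ∧ S.adj u w ∧ S.IsNChain k w v c' := by
  constructor
  · rintro ⟨hlen, hhead, hlast, hch⟩
    rcases c with _ | ⟨a, _ | ⟨w, c'⟩⟩
    · simp at hlen
    · simp at hlen
    obtain rfl : a = u := by simpa using hhead
    rw [List.getLast?_cons_cons] at hlast
    rw [List.Chain', List.isChain_cons_cons] at hch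
    exact ⟨w, w :: c', rfl, hch.1, by simpa using hlen, rfl, hlast, hch.2⟩
  · rintro ⟨w, c', rfl, huw, hlen, hhead, hlast, hch⟩
    rcases c' with _ | ⟨a, c'⟩
    · simp at hlen
    obtain rfl : a = w := by simpa using hhead
    exact ⟨by simpa using hlen, rfl, by rwa [List.getLast?_cons_cons],
      List.isChain_cons_cons.2 ⟨huw, hch⟩⟩

variable {S}

theorem IsNChain.isLeft_eq_iff_even {k : ℕ} {u v : P ⊕ B} {c : List (P ⊕ B)}
    (h : S.IsNChain k u v c) : u.isLeft = v.isLeft ↔ Even k := by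
  induction k generalizing u c with
  | zero => simp [((S.isNChain_zero_iff).1 h).2]
  | succ k ih =>
    obtain ⟨w, c', -, huw, hw⟩ := (S.isNChain_succ_iff).1 h
    rw [Nat.even_add_one, ← ih hw]
    revert huw
    cases u <;> cases w <;> cases v <;> simp

theorem IsNChain.odd_of_inl_inr {k : ℕ} {a : P} {b : B} {c : List (P ⊕ B)}
    (h : S.IsNChain k (Sum.inl a) (Sum.inr b) c) : Odd k := by
  simpa using h.isLeft_eq_iff_even

theorem dist_eq_of_isNChain {k : ℕ} {u v : P ⊕ B} {c : List (P ⊕ B)}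
    (hc : S.IsNChain k u v c) (hmin : ∀ j c', S.IsNChain j u v c' → k ≤ j) :
    S.dist u v = k :=
  le_antisymm (sInf_le ⟨k, c, rfl, hc⟩) <| le_sInf <| by
    rintro _ ⟨j, c', rfl, hc'⟩
    exact_mod_cast hmin j c' hc'

end IncStruct

namespace MStruct

open IncStruct

variable {P B G Λ : Type*} [Group G] [MulAction G Λ] {S : IncStruct P B} {φ : B → P → G}
  {p q : P} {lam : Λ}

@[simp]
theorem inc_inl {r : P} {μ : Λ} : (MStruct S φ Λ).inc (Sum.inl r) (p, μ) ↔ r = p := Iff.rfl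

@[simp]
theorem inc_inr {b : B} {l μ : Λ} :
    (MStruct S φ Λ).inc (Sum.inr (b, l)) (p, μ) ↔ S.inc p b ∧ μ = φ b p • l := Iff.rfl

theorem not_isNChain_one (hpq : p ≠ q) (c : List ((P ⊕ B × Λ) ⊕ P × Λ)) :
    ¬ (MStruct S φ Λ).IsNChain 1 (Sum.inl (Sum.inl p)) (Sum.inr (q, lam)) c := by
  intro hc
  obtain ⟨_, _, -, hadj, hc'⟩ := (isNChain_succ_iff (k := 0) _).1 hc
  obtain ⟨-, rfl⟩ := (isNChain_zero_iff _).1 hc'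
  exact hpq hadj

theorem three_le_of_isNChain (hpq : p ≠ q) {k : ℕ} {c : List ((P ⊕ B × Λ) ⊕ P × Λ)}
    (hc : (MStruct S φ Λ).IsNChain k (Sum.inl (Sum.inl p)) (Sum.inr (q, lam)) c) : 3 ≤ k := by
  obtain ⟨m, rfl⟩ := hc.odd_of_inl_inr
  rcases m with _ | m
  · exact absurd hc (not_isNChain_one hpq c)
  · omega

theorem isNChain_three_iff (hpq : p ≠ q) {c : List ((P ⊕ B × Λ) ⊕ P × Λ)} :
    (MStruct S φ Λ).IsNChain 3 (Sum.inl (Sum.inl p)) (Sum.inr (q, lam)) c ↔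
      ∃ b l, S.inc p b ∧ S.inc q b ∧ lam = φ b q • l ∧
        c = [Sum.inl (Sum.inl p), Sum.inr (p, φ b p • l), Sum.inl (Sum.inr (b, l)),
          Sum.inr (q, lam)] := by
  simp only [isNChain_succ_iff, isNChain_zero_iff]
  constructor
  · rintro ⟨w₁, _, rfl, h₀₁, w₂, _, rfl, h₁₂, w₃, _, rfl, h₂₃, rfl, rfl⟩
    rcases w₁ with w₁ | ⟨p₁, μ⟩
    · exact absurd h₀₁ (not_adj_inl_inl _)
    rcases w₂ with (r | ⟨b, l⟩) | w₂
    · simp only [adj_inl_inr, adj_inr_inl, inc_inl] at h₀₁ h₁₂ h₂₃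
      exact absurd (h₀₁.trans h₁₂.symm |>.trans h₂₃) hpq
    · simp only [adj_inl_inr, adj_inr_inl, inc_inl, inc_inr] at h₀₁ h₁₂ h₂₃
      obtain rfl := h₀₁
      obtain ⟨hpb, rfl⟩ := h₁₂
      obtain ⟨hqb, rfl⟩ := h₂₃
      exact ⟨b, l, hpb, hqb, rfl, rfl⟩
    · exact absurd h₁₂ (not_adj_inr_inr _)
  · rintro ⟨b, l, hpb, hqb, rfl, rfl⟩
    exact ⟨Sum.inr (p, φ b p • l), _, rfl, by simp, Sum.inl (Sum.inr (b, l)), _, rfl,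
      by simp [hpb], Sum.inr (q, φ b q • l), _, rfl, by simp [hqb], rfl, rfl⟩

end MStruct

theorem dist_xp_zq_general {P B G Λ : Type*} [Group G] [MulAction G Λ]
    (S : IncStruct P B) (φ : B → P → G) (hLS : S.IsLinearSpace)
    (p q : P) (hpq : p ≠ q) (lam : Λ) :
    (MStruct S φ Λ).dist (Sum.inl (Sum.inl p)) (Sum.inr (q, lam)) = 3 ∧
    ∃! c : List ((P ⊕ B × Λ) ⊕ P × Λ),
      (MStruct S φ Λ).IsNChain 3 (Sum.inl (Sum.inl p)) (Sum.inr (q, lam)) c := by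
  obtain ⟨b, ⟨hpb, hqb⟩, hb_unique⟩ := hLS.1 p q hpq
  have hc₀ := (MStruct.isNChain_three_iff (φ := φ) (lam := lam) hpq).2
    ⟨b, (φ b q)⁻¹ • lam, hpb, hqb, (smul_inv_smul _ _).symm, rfl⟩
  refine ⟨IncStruct.dist_eq_of_isNChain hc₀ fun _ _ => MStruct.three_le_of_isNChain hpq,
    _, hc₀, fun c hc => ?_⟩
  obtain ⟨b', l, hpb', hqb', rfl, rfl⟩ := (MStruct.isNChain_three_iff hpq).1 hc
  obtain rfl := hb_unique b' ⟨hpb', hqb'⟩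
  rw [inv_smul_smul]

/-- in 𝔐(Γ,φ) over a linear space, for `p ≠ q` the distance from
`x_p` to `z_{q,λ}` is `3`, and there is a unique `3`-chain between them. -/
theorem dist_xp_zq {P B G Λ : Type*} [Group G] [MulAction G Λ] [Nonempty Λ]
    (S : IncStruct P B) (φ : B → P → G) (hLS : S.IsLinearSpace)
    (p q : P) (hpq : p ≠ q) (lam : Λ) :
    (MStruct S φ Λ).dist (Sum.inl (Sum.inl p)) (Sum.inr (q, lam)) = 3 ∧
    ∃! c : List ((P ⊕ B × Λ) ⊕ P × Λ),
      (MStruct S φ Λ).IsNChain 3 (Sum.inl (Sum.inl p)) (Sum.inr (q, lam)) c :=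
  dist_xp_zq_general S φ hLS p q hpq lam
end

section
/- Let F be a field, and consider the affine plane over F with points F×F, vertical lines L_b = {(b,y) : y ∈ F}, and non-vertical lines L_{m,b} = {(x,mx+b) : x ∈ F}. Define a gain function φ on edges of the incidence graph, with values in the additive group (F,+), by φ({L_b,(b,y)}) = -by and φ({L_{m,b},(x,mx+b)}) = xb. Then for every line L and point p not on L, the function ρ_{L,p} from the points of L to F, given by ρ_{L,p}(q) = φ(M p) - φ(M q) + φ(L q) where M is the unique line through p and q, is injective. -/
open Classical

section Affine

variable {F : Type*} [Field F]

/-- Incidence in the affine plane over `F`: lines are `Sum.inl b` (the vertical line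
`L_b`) and `Sum.inr (m, b)` (the line `L_{m,b}` with slope `m` and `y`-intercept `b`). -/
def affInc (p : F × F) : F ⊕ F × F → Prop
  | Sum.inl b => p.1 = b
  | Sum.inr (m, b) => p.2 = m * p.1 + b

/-- The affine plane over `F` as an incidence structure. -/
def affPlane (F : Type*) [Field F] : IncStruct (F × F) (F ⊕ F × F) := ⟨fun p L => affInc p L⟩

/-- The gain function: `φ({L_b,(b,y)}) = -b*y` and `φ({L_{m,b},(x,mx+b)}) = x*b`. -/
def affGain : F ⊕ F × F → F × F → F
  | Sum.inl b, p => -(b * p.2)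
  | Sum.inr (_, b), p => p.1 * b

/-- The unique line through two distinct points of the affine plane. -/
noncomputable def lineThrough (p q : F × F) : F ⊕ F × F :=
  if p.1 = q.1 then Sum.inl p.1
  else Sum.inr ((p.2 - q.2) / (p.1 - q.1), q.2 - (p.2 - q.2) / (p.1 - q.1) * q.1)

/-- `ρ_{L,p}(q) = φ(Mp) - φ(Mq) + φ(Lq)`, where `M` is the line through `p` and `q`. -/
noncomputable def rhoAff (L : F ⊕ F × F) (p q : F × F) : F :=
  affGain (lineThrough p q) p - affGain (lineThrough p q) q + affGain L q

end Affine

/-! The gain difference `φ(Mp) - φ(Mq)` along the line `M` through `p` and `q` is the determinant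
`p₁q₂ - q₁p₂`, whether `M` is vertical or not. Hence, for `q` on `L`, `ρ_{L,p}(q)` is an affine
function of the parameter of `q` on `L` whose slope is the equation of `L` evaluated at `p`, and this
slope is nonzero because `p ∉ L`. -/

section Affine

variable {F : Type*} [Field F]

lemma affGain_lineThrough_sub (p q : F × F) :
    affGain (lineThrough p q) p - affGain (lineThrough p q) q = p.1 * q.2 - q.1 * p.2 := by
  unfold lineThrough
  split_ifs with h
  · simp only [affGain, h]
    ring
  · have : p.1 - q.1 ≠ 0 := sub_ne_zero.2 h
    simp only [affGain]
    field_simp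
    ring

lemma rhoAff_inl (b : F) (p : F × F) (y : F) :
    rhoAff (Sum.inl b) p (b, y) = (p.1 - b) * y - b * p.2 := by
  rw [rhoAff, affGain_lineThrough_sub, affGain]
  ring

lemma rhoAff_inr (m c : F) (p : F × F) (x : F) :
    rhoAff (Sum.inr (m, c)) p (x, m * x + c) = (m * p.1 + c - p.2) * x + p.1 * c := by
  rw [rhoAff, affGain_lineThrough_sub, affGain]
  ring

lemma injective_rhoAff_inl {b : F} {p : F × F} (hp : p.1 ≠ b) :
    Function.Injective fun y => rhoAff (Sum.inl b) p (b, y) := by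
  simp only [rhoAff_inl]
  exact sub_left_injective.comp (mul_right_injective₀ (sub_ne_zero.2 hp))

lemma injective_rhoAff_inr {m c : F} {p : F × F} (hp : p.2 ≠ m * p.1 + c) :
    Function.Injective fun x => rhoAff (Sum.inr (m, c)) p (x, m * x + c) := by
  simp only [rhoAff_inr]
  exact (add_left_injective _).comp (mul_right_injective₀ (sub_ne_zero.2 hp.symm))

end Affine

/-- for the gain function `φ(L_b,(b,y)) = -by`, `φ(L_{m,b},(x,mx+b)) = xb`
on the affine plane over a field `F`, the function `ρ_{L,p}` is injective for every
line `L` and point `p` not on `L`. -/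
theorem rhoAff_injective {F : Type*} [Field F] (L : F ⊕ F × F) (p : F × F)
    (hp : ¬ affInc p L) :
    Function.Injective (fun q : {q : F × F // affInc q L} => rhoAff L p q.1) := by
  rintro ⟨⟨x, y⟩, hq⟩ ⟨⟨x', y'⟩, hq'⟩ h
  rcases L with b | ⟨m, c⟩
  · obtain rfl : x = b := hq
    obtain rfl : x' = x := hq'
    obtain rfl : y = y' := injective_rhoAff_inl hp h
    rfl
  · obtain rfl : y = m * x + c := hq
    obtain rfl : y' = m * x' + c := hq'
    obtain rfl : x = x' := injective_rhoAff_inr hp h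
    rfl
end

section
/- Let (Γ,φ) be an incidence gain graph whose underlying incidence structure (P,B,I) is a linear space, with gain group acting on a nonempty set Λ. Suppose that for all pairs (b,p) with p not incident to b and all λ ∈ Λ, the map ρ_{b,p,λ} : P_b → Λ is surjective. Then for every b ∈ B, p ∈ P with p not incident to b, and λ, μ ∈ Λ, there exists a 3-chain in 𝔐(Γ,φ) from y_{b,λ} to z_{p,μ} of the form (y_{b,λ}, z_{q,λ₁}, y_{b',λ₂}, z_{p,μ}), where q is a point on b, b' is the unique line through p and q, λ₁ = φ(bq)·λ, λ₂ = φ(b'q)⁻¹·λ₁, and μ = φ(b'p)·λ₂. -/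
open Classical

namespace IncStruct

variable {P B : Type*}

theorem IsLinearSpace.exists_line_through {S : IncStruct P B} (hS : S.IsLinearSpace)
    {p q : P} (hpq : p ≠ q) : ∃ b, S.inc p b ∧ S.inc q b :=
  (hS.1 p q hpq).exists

end IncStruct

section Construction

variable {P B G Λ : Type*} [Group G] [MulAction G Λ] (S : IncStruct P B) (φ : B → P → G)

theorem rho_smul_eq_of_line {b : B} {p q : P} (h : ∃ b', S.inc p b' ∧ S.inc q b') (lam : Λ) :
    rho S φ b p q • lam = φ h.choose p • (φ h.choose q)⁻¹ • φ b q • lam := by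
  rw [rho, dif_pos h, mul_smul, mul_smul]

theorem mStruct_isNChain_three {b b' : B} {p q : P} {lam lam₁ lam₂ mu : Λ}
    (hqb : S.inc q b) (hqb' : S.inc q b') (hpb' : S.inc p b')
    (h₁ : lam₁ = φ b q • lam) (h₂ : lam₂ = (φ b' q)⁻¹ • lam₁) (hmu : mu = φ b' p • lam₂) :
    (MStruct S φ Λ).IsNChain 3 (Sum.inl (Sum.inr (b, lam))) (Sum.inr (p, mu))
      [Sum.inl (Sum.inr (b, lam)), Sum.inr (q, lam₁),
        Sum.inl (Sum.inr (b', lam₂)), Sum.inr (p, mu)] := by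
  refine ⟨rfl, rfl, rfl, List.isChain_cons_cons.2 ⟨⟨hqb, h₁⟩,
    List.isChain_cons_cons.2 ⟨⟨hqb', ?_⟩,
      List.isChain_cons_cons.2 ⟨⟨hpb', hmu⟩, List.isChain_singleton _⟩⟩⟩⟩
  rw [h₂, smul_inv_smul]

end Construction

theorem exists_three_chain_of_rho_surjective_general {P B G Λ : Type*} [Group G]
    [MulAction G Λ] (S : IncStruct P B) (φ : B → P → G)
    (hLS : S.IsLinearSpace)
    (hsurj : ∀ (p : P) (b : B), ¬ S.inc p b → ∀ lam : Λ,
      Function.Surjective (fun q : {q : P // S.inc q b} => rho S φ b p q.1 • lam)) :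
    ∀ (b : B) (p : P), ¬ S.inc p b → ∀ lam mu : Λ,
      ∃ (q : P) (b' : B) (lam₁ lam₂ : Λ),
        S.inc q b ∧ S.inc p b' ∧ S.inc q b' ∧
        lam₁ = φ b q • lam ∧ lam₂ = (φ b' q)⁻¹ • lam₁ ∧ mu = φ b' p • lam₂ ∧
        (MStruct S φ Λ).IsNChain 3 (Sum.inl (Sum.inr (b, lam))) (Sum.inr (p, mu))
          [Sum.inl (Sum.inr (b, lam)), Sum.inr (q, lam₁),
            Sum.inl (Sum.inr (b', lam₂)), Sum.inr (p, mu)] := by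
  intro b p hpb lam mu
  obtain ⟨⟨q, hqb⟩, hq⟩ := hsurj p b hpb lam mu
  have hline := hLS.exists_line_through (show p ≠ q by rintro rfl; exact hpb hqb)
  obtain ⟨hpb', hqb'⟩ := hline.choose_spec
  have hmu := hq.symm.trans (rho_smul_eq_of_line S φ hline lam)
  exact ⟨q, _, _, _, hqb, hpb', hqb', rfl, rfl, hmu,
    mStruct_isNChain_three S φ hqb hqb' hpb' rfl rfl hmu⟩

/-- if every `ρ_{b,p,λ}` is surjective, then for `p` not on `b` and
`λ, μ ∈ Λ` there is a `3`-chain `(y_{b,λ}, z_{q,λ₁}, y_{b',λ₂}, z_{p,μ})` in 𝔐(Γ,φ)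
with `q` on `b`, `b'` the line through `p` and `q`, `λ₁ = φ(bq)•λ`,
`λ₂ = φ(b'q)⁻¹•λ₁` and `μ = φ(b'p)•λ₂`. -/
theorem exists_three_chain_of_rho_surjective {P B G Λ : Type*} [Group G]
    [MulAction G Λ] [Nonempty Λ] (S : IncStruct P B) (φ : B → P → G)
    (hLS : S.IsLinearSpace)
    (hsurj : ∀ (p : P) (b : B), ¬ S.inc p b → ∀ lam : Λ,
      Function.Surjective (fun q : {q : P // S.inc q b} => rho S φ b p q.1 • lam)) :
    ∀ (b : B) (p : P), ¬ S.inc p b → ∀ lam mu : Λ,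
      ∃ (q : P) (b' : B) (lam₁ lam₂ : Λ),
        S.inc q b ∧ S.inc p b' ∧ S.inc q b' ∧
        lam₁ = φ b q • lam ∧ lam₂ = (φ b' q)⁻¹ • lam₁ ∧ mu = φ b' p • lam₂ ∧
        (MStruct S φ Λ).IsNChain 3 (Sum.inl (Sum.inr (b, lam))) (Sum.inr (p, mu))
          [Sum.inl (Sum.inr (b, lam)), Sum.inr (q, lam₁),
            Sum.inl (Sum.inr (b', lam₂)), Sum.inr (p, mu)] :=
  exists_three_chain_of_rho_surjective_general S φ hLS hsurj
end

section
/- Let (Γ,φ) be an incidence gain graph whose underlying incidence structure (P,B,I) is a linear space, with gain group acting on a nonempty set Λ, and suppose 𝔐(Γ,φ) is a generalized quadrangle. Then for every b ∈ B, p ∈ P with p not incident to b, and λ, μ ∈ Λ, there exists a unique point q on b such that ρ_{b,p,λ}(q) = μ. -/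
/-!
In 𝔐(Γ,φ) the point `y_{b,λ}` and the line `z_{p,μ}` are at distance 3: the distance is at
most 4, it is odd because the incidence graph is bipartite, and it is not 1 because `p` is not
on `b`. The 3-chains from `y_{b,λ}` to `z_{p,μ}` are exactly
`(y_{b,λ}, z_{q,φ(bq)λ}, y_{b',φ(b'q)⁻¹φ(bq)λ}, z_{p,μ})` with `q` on `b`, `b' = pq` and
`ρ_{b,p,λ}(q) = μ`, so the uniqueness of that chain in a generalized quadrangle leaves exactly
one such `q`.
-/

open Classical

namespace List

theorem IsChain.getLast_eq_xor {α : Type*} {r : α → α → Prop} {f : α → Bool}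
    (hf : ∀ x y, r x y → f y = !f x) :
    ∀ {u : α} {t : List α}, IsChain r (u :: t) →
      f ((u :: t).getLast (cons_ne_nil u t)) = (f u ^^ decide (Odd t.length))
  | _, [], _ => by simp
  | u, a :: t, h => by
    obtain ⟨hua, ht⟩ := isChain_cons_cons.mp h
    rw [getLast_cons_cons, getLast_eq_xor hf ht, hf u a hua]
    cases f u <;> simp [Nat.odd_add_one, ← Nat.not_even_iff_odd]

end List

namespace IncStruct

variable {P B : Type*} (S : IncStruct P B)

theorem odd_of_isNChain_inl_inr {k : ℕ} {p : P} {b : B} {c : List (P ⊕ B)}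
    (hc : S.IsNChain k (.inl p) (.inr b) c) : Odd k := by
  obtain ⟨hlen, hhead, hlast, hchain⟩ := hc
  obtain ⟨t, rfl⟩ : ∃ t, c = .inl p :: t := by
    cases c with
    | nil => simp at hhead
    | cons a t => simp_all
  have hside := hchain.getLast_eq_xor (f := Sum.isRight) (by
    rintro (x | x) (y | y) hxy <;> first | rfl | exact hxy.elim)
  rw [List.getLast?_eq_getLast_of_ne_nil (List.cons_ne_nil _ _), Option.some_inj] at hlast
  simp_all

theorem exists_isNChain_of_dist_ne_top {u v : P ⊕ B} (h : S.dist u v ≠ ⊤) :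
    ∃ (k : ℕ) (c : List (P ⊕ B)), S.dist u v = k ∧ S.IsNChain k u v c := by
  have hne : {n : ℕ∞ | ∃ (k : ℕ) (c : List (P ⊕ B)), n = k ∧ S.IsNChain k u v c}.Nonempty := by
    by_contra hempty
    exact h (by rw [dist, Set.not_nonempty_iff_eq_empty.mp hempty, sInf_empty])
  obtain ⟨k, c, hk, hc⟩ := csInf_mem hne
  exact ⟨k, c, hk, hc⟩

theorem adj_of_isNChain_one {u v : P ⊕ B} {c : List (P ⊕ B)} (hc : S.IsNChain 1 u v c) :
    S.adj u v := by
  obtain ⟨hlen, hhead, hlast, hchain⟩ := hc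
  match c, hlen with
  | [a, b], _ =>
    simp only [List.head?_cons, List.getLast?_cons_cons, List.getLast?_singleton,
      Option.some_inj] at hhead hlast
    subst hhead hlast
    exact List.isChain_pair.mp hchain

theorem isNChain_three_iff {u v : P ⊕ B} {c : List (P ⊕ B)} :
    S.IsNChain 3 u v c ↔
      ∃ a₁ a₂, c = [u, a₁, a₂, v] ∧ S.adj u a₁ ∧ S.adj a₁ a₂ ∧ S.adj a₂ v := by
  constructor
  · rintro ⟨hlen, hhead, hlast, hchain⟩
    match c, hlen with
    | [a₀, a₁, a₂, a₃], _ =>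
      simp only [List.head?_cons, List.getLast?_cons_cons, List.getLast?_singleton,
        Option.some_inj] at hhead hlast
      subst hhead hlast
      change List.IsChain _ _ at hchain
      simp only [List.isChain_cons_cons, List.isChain_singleton, and_true] at hchain
      exact ⟨a₁, a₂, rfl, hchain⟩
  · rintro ⟨a₁, a₂, rfl, h₀, h₁, h₂⟩
    exact ⟨rfl, rfl, rfl, List.isChain_cons_cons.mpr
      ⟨h₀, List.isChain_cons_cons.mpr ⟨h₁, List.isChain_pair.mpr h₂⟩⟩⟩

end IncStruct

section Construction

variable {P B G Λ : Type*} [Group G] [MulAction G Λ] {S : IncStruct P B} {φ : B → P → G}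

theorem rho_eq_of_inc (hLS : S.IsLinearSpace) {b b' : B} {p q : P} (hpq : p ≠ q)
    (hp : S.inc p b') (hq : S.inc q b') : rho S φ b p q = φ b' p * (φ b' q)⁻¹ * φ b q := by
  have hline : ∃ b'', S.inc p b'' ∧ S.inc q b'' := ⟨b', hp, hq⟩
  obtain ⟨_, _, hunique⟩ := hLS.1 p q hpq
  rw [rho, dif_pos hline, hunique _ hline.choose_spec, hunique b' ⟨hp, hq⟩]

namespace MStruct

theorem exists_rho_smul_eq_of_adj (hLS : S.IsLinearSpace) {b : B} {p : P} (hpb : ¬ S.inc p b)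
    {lam mu : Λ} {a₁ a₂ : (P ⊕ B × Λ) ⊕ P × Λ}
    (h₀ : (MStruct S φ Λ).adj (.inl (.inr (b, lam))) a₁) (h₁ : (MStruct S φ Λ).adj a₁ a₂)
    (h₂ : (MStruct S φ Λ).adj a₂ (.inr (p, mu))) :
    ∃ q, S.inc q b ∧ rho S φ b p q • lam = mu ∧ a₁ = .inr (q, φ b q • lam) := by
  obtain _ | ⟨q, m⟩ := a₁
  · exact h₀.elim
  obtain ⟨hqb, rfl⟩ : S.inc q b ∧ m = φ b q • lam := h₀
  obtain (r | ⟨b', l⟩) | _ := a₂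
  · obtain rfl : r = q := h₁
    obtain rfl : r = p := h₂
    exact absurd hqb hpb
  · obtain ⟨hqb', hl⟩ : S.inc q b' ∧ φ b q • lam = φ b' q • l := h₁
    obtain ⟨hpb', rfl⟩ : S.inc p b' ∧ mu = φ b' p • l := h₂
    refine ⟨q, hqb, ?_, rfl⟩
    rw [rho_eq_of_inc hLS (fun h : p = q => hpb (h ▸ hqb)) hpb' hqb', mul_smul, mul_smul, hl,
      inv_smul_smul]
  · exact h₁.elim

theorem exists_isNChain_three_of_rho_smul_eq (hLS : S.IsLinearSpace) {b : B} {p q : P}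
    (hpb : ¬ S.inc p b) (hqb : S.inc q b) {lam mu : Λ} (hq : rho S φ b p q • lam = mu) :
    ∃ a₂, (MStruct S φ Λ).IsNChain 3 (.inl (.inr (b, lam))) (.inr (p, mu))
      [.inl (.inr (b, lam)), .inr (q, φ b q • lam), a₂, .inr (p, mu)] := by
  have hpq : p ≠ q := fun h => hpb (h ▸ hqb)
  obtain ⟨b', ⟨hpb', hqb'⟩, -⟩ := hLS.1 p q hpq
  refine ⟨.inl (.inr (b', (φ b' q)⁻¹ • φ b q • lam)),
    (IncStruct.isNChain_three_iff _).mpr ⟨_, _, rfl, ⟨hqb, rfl⟩, ⟨hqb', ?_⟩, ⟨hpb', ?_⟩⟩⟩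
  · exact (smul_inv_smul _ _).symm
  · rw [← hq, rho_eq_of_inc hLS hpq hpb' hqb', mul_smul, mul_smul]

theorem dist_eq_three (hGQ : (MStruct S φ Λ).IsGQ) {b : B} {p : P} (hpb : ¬ S.inc p b)
    (lam mu : Λ) : (MStruct S φ Λ).dist (.inl (.inr (b, lam))) (.inr (p, mu)) = 3 := by
  have hle := hGQ.1 (.inl (.inr (b, lam))) (.inr (p, mu))
  obtain ⟨k, c, hk, hc⟩ := IncStruct.exists_isNChain_of_dist_ne_top _ (ne_top_of_le_ne_top
    (by decide) hle)
  have hk4 : k ≤ 4 := by exact_mod_cast hk ▸ hle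
  have hk1 : k ≠ 1 := by
    rintro rfl
    exact hpb ((IncStruct.adj_of_isNChain_one _ hc : S.inc p b ∧ _).1)
  obtain ⟨m, rfl⟩ := IncStruct.odd_of_isNChain_inl_inr _ hc
  rw [hk]
  norm_cast
  omega

end MStruct

end Construction

theorem existsUnique_rho_point_of_isGQ_general {P B G Λ : Type*} [Group G] [MulAction G Λ]
    (S : IncStruct P B) (φ : B → P → G) (hLS : S.IsLinearSpace)
    (hGQ : (MStruct S φ Λ).IsGQ) :
    ∀ (b : B) (p : P), ¬ S.inc p b → ∀ lam mu : Λ,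
      ∃! q : {q : P // S.inc q b}, rho S φ b p q.1 • lam = mu := by
  intro b p hpb lam mu
  obtain ⟨c, hc, hc_unique⟩ := hGQ.2 _ _ 3 (by norm_num) (MStruct.dist_eq_three hGQ hpb lam mu)
  obtain ⟨a₁, a₂, rfl, h₀, h₁, h₂⟩ := (IncStruct.isNChain_three_iff _).mp hc
  obtain ⟨q, hqb, hq, rfl⟩ := MStruct.exists_rho_smul_eq_of_adj hLS hpb h₀ h₁ h₂
  refine ⟨⟨q, hqb⟩, hq, fun ⟨q', hq'b⟩ hq' => ?_⟩
  obtain ⟨a₂', hc'⟩ := MStruct.exists_isNChain_three_of_rho_smul_eq hLS hpb hq'b hq'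
  have hsame := hc_unique _ hc'
  simp only [List.cons.injEq, Sum.inr.injEq, Prod.mk.injEq] at hsame
  exact Subtype.ext hsame.2.1.1

/-- if 𝔐(Γ,φ) is a generalized quadrangle, then for `p` not on `b` and
any `λ, μ ∈ Λ` there is a unique point `q` on `b` with `ρ_{b,p,λ}(q) = μ`. -/
theorem existsUnique_rho_point_of_isGQ {P B G Λ : Type*} [Group G] [MulAction G Λ]
    [Nonempty Λ] (S : IncStruct P B) (φ : B → P → G) (hLS : S.IsLinearSpace)
    (hGQ : (MStruct S φ Λ).IsGQ) :
    ∀ (b : B) (p : P), ¬ S.inc p b → ∀ lam mu : Λ,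
      ∃! q : {q : P // S.inc q b}, rho S φ b p q.1 • lam = mu :=
  existsUnique_rho_point_of_isGQ_general S φ hLS hGQ
end
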